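/- Let (G,f) be a minimal ℝ²-filtered graph and ≺ a total order on E refining the lexicographic order induced by f. If d ∈ E is cycle-creating with respect to ≺ and w = (s¹e¹,...,sᵏeᵏ) is any witness for d (a directed path from d₀ to d₁ using only edges eⁱ ≺ d), then max_{1≤i≤k} f_y(eⁱ) > f_y(d); consequently f(d) < f(w), where f(w) = (f_x(d), max_i f_y(eⁱ)). -/
import Mathlib


structure Grph where
  V : Type
  E : Type
  [fintV : Fintype V]
  [fintE : Fintype E]
  [decV : DecidableEq V]
  [decE : DecidableEq E]
  bnd : E → V × V

attribute [instance] Grph.fintV Grph.fintE Grph.decV Grph.decE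

/-- boundary map k⟨E⟩ → k⟨V⟩, e ↦ e₁ - e₀ -/
noncomputable def Grph.d (G : Grph) (k : Type) [Field k] :
    (G.E →₀ k) →ₗ[k] (G.V →₀ k) :=
  Finsupp.linearCombination k fun e =>
    Finsupp.single (G.bnd e).2 1 - Finsupp.single (G.bnd e).1 1

def Grph.adj (G : Grph) (v w : G.V) : Prop :=
  ∃ e, G.bnd e = (v, w) ∨ G.bnd e = (w, v)

structure FGrph (P : Type) [PartialOrder P] extends Grph where
  fV : V → P
  fE : E → P
  mono0 : ∀ e, fV (bnd e).1 ≤ fE e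
  mono1 : ∀ e, fV (bnd e).2 ≤ fE e

variable {P : Type} [PartialOrder P]

/-- boundary map of the sublevel graph at grade r -/
noncomputable def FGrph.dr (G : FGrph P) (k : Type) [Field k] (r : P) :
    ({e : G.E // G.fE e ≤ r} →₀ k) →ₗ[k] ({v : G.V // G.fV v ≤ r} →₀ k) :=
  Finsupp.linearCombination k fun e =>
    Finsupp.single ⟨(G.bnd e.1).2, le_trans (G.mono1 e.1) e.2⟩ 1 -
    Finsupp.single ⟨(G.bnd e.1).1, le_trans (G.mono0 e.1) e.2⟩ 1

noncomputable def FGrph.vmap (G : FGrph P) (k : Type) [Field k] {r s : P} (h : r ≤ s) :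
    ({v : G.V // G.fV v ≤ r} →₀ k) →ₗ[k] ({v : G.V // G.fV v ≤ s} →₀ k) :=
  Finsupp.lmapDomain k k fun v => ⟨v.1, le_trans v.2 h⟩

noncomputable def FGrph.emap (G : FGrph P) (k : Type) [Field k] {r s : P} (h : r ≤ s) :
    ({e : G.E // G.fE e ≤ r} →₀ k) →ₗ[k] ({e : G.E // G.fE e ≤ s} →₀ k) :=
  Finsupp.lmapDomain k k fun e => ⟨e.1, le_trans e.2 h⟩

lemma FGrph.dNat (G : FGrph P) (k : Type) [Field k] {r s : P} (h : r ≤ s) :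
    (G.dr k s).comp (G.emap k h) = (G.vmap k h).comp (G.dr k r) := by
  apply Finsupp.lhom_ext
  intro e a
  show (G.dr k s) ((G.emap k h) (Finsupp.single e a)) =
    (G.vmap k h) ((G.dr k r) (Finsupp.single e a))
  rw [FGrph.emap, Finsupp.lmapDomain_apply, Finsupp.mapDomain_single, FGrph.dr,
    Finsupp.linearCombination_single, FGrph.dr, Finsupp.linearCombination_single,
    map_smul, map_sub, FGrph.vmap, Finsupp.lmapDomain_apply, Finsupp.lmapDomain_apply,
    Finsupp.mapDomain_single, Finsupp.mapDomain_single]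

/-- 0-dim homology of the sublevel graph at r -/
noncomputable abbrev FGrph.H0at (G : FGrph P) (k : Type) [Field k] (r : P) :=
  ({v : G.V // G.fV v ≤ r} →₀ k) ⧸ LinearMap.range (G.dr k r)

noncomputable def FGrph.H0map (G : FGrph P) (k : Type) [Field k] {r s : P} (h : r ≤ s) :
    G.H0at k r →ₗ[k] G.H0at k s :=
  Submodule.mapQ _ _ (G.vmap k h) (by
    rintro x ⟨y, rfl⟩
    exact ⟨G.emap k h y, by
      have := LinearMap.congr_fun (G.dNat k h) y
      simpa using this⟩)

noncomputable abbrev FGrph.H1at (G : FGrph P) (k : Type) [Field k] (r : P) :=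
  LinearMap.ker (G.dr k r)

noncomputable def FGrph.H1map (G : FGrph P) (k : Type) [Field k] {r s : P} (h : r ≤ s) :
    G.H1at k r →ₗ[k] G.H1at k s :=
  (G.emap k h).restrict (p := LinearMap.ker (G.dr k r)) (q := LinearMap.ker (G.dr k s))
    (by
      intro x hx
      have := LinearMap.congr_fun (G.dNat k h) x
      simp only [LinearMap.mem_ker] at hx ⊢
      simp only [LinearMap.coe_comp, Function.comp_apply] at this
      rw [this, hx, map_zero])

def FGrph.adjAt (G : FGrph P) (r : P) (a b : G.V) : Prop :=
  ∃ e, G.fE e ≤ r ∧ (G.bnd e = (a, b) ∨ G.bnd e = (b, a))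

def FGrph.connAt (G : FGrph P) (r : P) : G.V → G.V → Prop :=
  Relation.ReflTransGen (G.adjAt r)

def FGrph.pi0At (G : FGrph P) (r : P) :=
  Quot (fun a b : {v : G.V // G.fV v ≤ r} => G.adjAt r a.1 b.1)

def FGrph.Collapsible (G : FGrph P) (e : G.E) : Prop :=
  (G.bnd e).1 ≠ (G.bnd e).2 ∧
    (G.fE e = G.fV (G.bnd e).1 ∨ G.fE e = G.fV (G.bnd e).2)

def FGrph.delete (G : FGrph P) (e : G.E) : FGrph P where
  V := G.V
  E := {d : G.E // d ≠ e}
  bnd d := G.bnd d.1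
  fV := G.fV
  fE d := G.fE d.1
  mono0 d := G.mono0 d.1
  mono1 d := G.mono1 d.1

def FGrph.Deletable (G : FGrph P) (e : G.E) : Prop :=
  (G.delete e).connAt (G.fE e) (G.bnd e).1 (G.bnd e).2

def FGrph.collapse (G : FGrph P) (e : G.E) (x y : G.V) (hxy : y ≠ x)
    (hf : G.fV y ≤ G.fV x) : FGrph P where
  V := {v : G.V // v ≠ x}
  E := {d : G.E // d ≠ e}
  bnd d :=
    (if h : (G.bnd d.1).1 = x then ⟨y, hxy⟩ else ⟨(G.bnd d.1).1, h⟩,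
     if h : (G.bnd d.1).2 = x then ⟨y, hxy⟩ else ⟨(G.bnd d.1).2, h⟩)
  fV v := G.fV v.1
  fE d := G.fE d.1
  mono0 d := by
    dsimp only
    split
    · exact le_trans hf (by rw [← ‹(G.bnd d.1).1 = x›]; exact G.mono0 d.1)
    · exact G.mono0 d.1
  mono1 d := by
    dsimp only
    split
    · exact le_trans hf (by rw [← ‹(G.bnd d.1).2 = x›]; exact G.mono1 d.1)
    · exact G.mono1 d.1


/-- in a minimal ℝ²-filtered graph, given a total order `≺` on the edges
refining the lexicographic order induced by `f`, any witness `(s¹e¹, …, sᵏeᵏ)` for a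
cycle-creating edge `d` (a directed path from `d₀` to `d₁` using only edges `≺ d`)
satisfies `max_i f_y(eⁱ) > f_y(d)`; consequently `f(d) < f(w) = (f_x(d), max_i f_y(eⁱ))`. -/
theorem witness_max_gt (G : FGrph (ℝ × ℝ))
    (hmin : ∀ e : G.E, ¬ G.Collapsible e ∧ ¬ G.Deletable e)
    (prec : G.E → G.E → Prop)
    (hirr : ∀ e, ¬ prec e e)
    (htrans : ∀ a b c, prec a b → prec b c → prec a c)
    (htot : ∀ e e', e ≠ e' → prec e e' ∨ prec e' e)
    (hrefine : ∀ e e', prec e e' →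
      (G.fE e).1 < (G.fE e').1 ∨ ((G.fE e).1 = (G.fE e').1 ∧ (G.fE e).2 ≤ (G.fE e').2))
    (d : G.E) (n : ℕ) (hn : 0 < n) (vs : Fin (n + 1) → G.V) (es : Fin n → G.E)
    (h0 : vs 0 = (G.bnd d).1) (hl : vs (Fin.last n) = (G.bnd d).2)
    (hprec : ∀ i, prec (es i) d)
    (hpath : ∀ i : Fin n, G.bnd (es i) = (vs i.castSucc, vs i.succ) ∨
      G.bnd (es i) = (vs i.succ, vs i.castSucc)) :
    (G.fE d).2 <
      Finset.univ.sup' (Finset.univ_nonempty_iff.mpr (Fin.pos_iff_nonempty.mp hn))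
        (fun i => (G.fE (es i)).2) ∧
    G.fE d <
      ((G.fE d).1,
        Finset.univ.sup' (Finset.univ_nonempty_iff.mpr (Fin.pos_iff_nonempty.mp hn))
          (fun i => (G.fE (es i)).2)) := by
  have key : (G.fE d).2 <
      Finset.univ.sup' (Finset.univ_nonempty_iff.mpr (Fin.pos_iff_nonempty.mp hn))
        (fun i => (G.fE (es i)).2) := by
    by_contra hle
    push_neg at hle
    have hE : ∀ i, G.fE (es i) ≤ G.fE d := by
      intro i
      have h2 : (G.fE (es i)).2 ≤ (G.fE d).2 :=
        le_trans (Finset.le_sup' (f := fun i => (G.fE (es i)).2) (Finset.mem_univ i)) hle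
      rcases hrefine _ _ (hprec i) with h | h
      · exact Prod.le_def.mpr ⟨le_of_lt h, h2⟩
      · exact Prod.le_def.mpr ⟨le_of_eq h.1, h2⟩
    apply (hmin d).2
    unfold FGrph.Deletable FGrph.connAt
    rw [← h0, ← hl]
    have step : ∀ j : Fin (n + 1),
        Relation.ReflTransGen ((G.delete d).adjAt (G.fE d)) (vs 0) (vs j) := by
      intro j
      induction j using Fin.induction with
      | zero => exact Relation.ReflTransGen.refl
      | succ i ih =>
        refine ih.tail ?_
        exact ⟨⟨es i, fun h => hirr d (h ▸ hprec i)⟩, hE i, hpath i⟩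
    exact step (Fin.last n)
  exact ⟨key, Prod.lt_iff.mpr (Or.inr ⟨le_refl _, key⟩)⟩
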